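/- For every t < 0 and θ ∈ ℝ, the curvature of the Angenent oval equals √(cos²θ + a(t)²); explicitly, writing x' = ∂_θ x, y' = ∂_θ y, x'' = ∂²_θ x, y'' = ∂²_θ y, one has (x'(θ,t)·y''(θ,t) − y'(θ,t)·x''(θ,t)) / (x'(θ,t)² + y'(θ,t)²)^{3/2} = √(cos²θ + a(t)²). -/

import Mathlib

/-! `θ` is the turning angle: `x' = cos θ / √(cos²θ + a²)` and `y' = sin θ / √(cos²θ + a²)`,
so the velocity is `g(θ) (cos θ, sin θ)` with speed `g = 1 / √(cos²θ + a²)`. For any curve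
whose velocity has this form, `x'y'' − y'x'' = g²` and the speed cubed is `g³`, so the
curvature `dθ/ds` is `1 / g`. -/

open Real

/-- `a(t) := (e^{-2t} - 1)^{-1/2}` for the Angenent oval. -/
noncomputable def angenentA (t : ℝ) : ℝ := Real.sqrt ((Real.exp (-2 * t) - 1)⁻¹)

/-- The `x`-coordinate of the Angenent oval in the turning angle parametrization. -/
noncomputable def angenentX (θ t : ℝ) : ℝ :=
  Real.arctan (Real.sin θ / Real.sqrt (Real.cos θ ^ 2 + angenentA t ^ 2))

/-- The `y`-coordinate of the Angenent oval in the turning angle parametrization. -/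
noncomputable def angenentY (θ t : ℝ) : ℝ :=
  -t + Real.log ((Real.sqrt (Real.cos θ ^ 2 + angenentA t ^ 2) - Real.cos θ) /
    Real.sqrt (angenentA t ^ 2 + 1))

noncomputable def signedCurvature (x y : ℝ → ℝ) (θ : ℝ) : ℝ :=
  (deriv x θ * deriv (deriv y) θ - deriv y θ * deriv (deriv x) θ) /
    (deriv x θ ^ 2 + deriv y θ ^ 2) ^ ((3 : ℝ) / 2)

theorem signedCurvature_eq_inv_of_deriv_eq {x y g : ℝ → ℝ} {θ : ℝ}
    (hx : deriv x = fun s => g s * cos s) (hy : deriv y = fun s => g s * sin s)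
    (hg : DifferentiableAt ℝ g θ) (hgθ : 0 < g θ) :
    signedCurvature x y θ = (g θ)⁻¹ := by
  have hx' : deriv (deriv x) θ = deriv g θ * cos θ - g θ * sin θ := by
    rw [hx]
    exact (hg.hasDerivAt.mul (hasDerivAt_cos θ)).deriv.trans (by ring)
  have hy' : deriv (deriv y) θ = deriv g θ * sin θ + g θ * cos θ := by
    rw [hy]
    exact (hg.hasDerivAt.mul (hasDerivAt_sin θ)).deriv.trans (by ring)
  have hnum : g θ * cos θ * (deriv g θ * sin θ + g θ * cos θ) -
      g θ * sin θ * (deriv g θ * cos θ - g θ * sin θ) = g θ ^ 2 := by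
    linear_combination g θ ^ 2 * cos_sq_add_sin_sq θ
  have hspeed : (g θ * cos θ) ^ 2 + (g θ * sin θ) ^ 2 = g θ ^ 2 := by
    linear_combination g θ ^ 2 * cos_sq_add_sin_sq θ
  have hcube : (g θ ^ 2) ^ ((3 : ℝ) / 2) = g θ ^ 3 := by
    rw [rpow_div_two_eq_sqrt _ (sq_nonneg _), sqrt_sq hgθ.le, rpow_ofNat]
  rw [signedCurvature, hx', hy', hx, hy, hnum, hspeed, hcube]
  field_simp

section

variable {c : ℝ}

theorem sqrt_cos_sq_add_pos (hc : 0 < c) (s : ℝ) : 0 < √(cos s ^ 2 + c) :=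
  sqrt_pos.2 (by positivity)

theorem cos_lt_sqrt_cos_sq_add (hc : 0 < c) (s : ℝ) : cos s < √(cos s ^ 2 + c) :=
  calc cos s ≤ |cos s| := le_abs_self _
    _ = √(cos s ^ 2) := (sqrt_sq_eq_abs _).symm
    _ < √(cos s ^ 2 + c) := sqrt_lt_sqrt (sq_nonneg _) (by linarith)

theorem hasDerivAt_sqrt_cos_sq_add (hc : 0 < c) (s : ℝ) :
    HasDerivAt (fun s => √(cos s ^ 2 + c)) (-(sin s * cos s) / √(cos s ^ 2 + c)) s := by
  have h : HasDerivAt (fun s => cos s ^ 2 + c) (2 * cos s * -sin s) s := by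
    simpa using ((hasDerivAt_cos s).pow 2).add_const c
  refine (h.sqrt (by positivity)).congr_deriv ?_
  field_simp

theorem hasDerivAt_arctan_sin_div_sqrt_cos_sq_add (hc : 0 < c) (s : ℝ) :
    HasDerivAt (fun s => arctan (sin s / √(cos s ^ 2 + c)))
      ((√(cos s ^ 2 + c))⁻¹ * cos s) s := by
  have hw := sqrt_cos_sq_add_pos hc s
  refine (((hasDerivAt_sin s).div (hasDerivAt_sqrt_cos_sq_add hc s) hw.ne').arctan).congr_deriv
    ?_
  simp only [Pi.div_apply]
  field_simp
  ring

theorem hasDerivAt_log_sqrt_cos_sq_add_sub_cos_div (hc : 0 < c) {k : ℝ} (hk : k ≠ 0) (s : ℝ) :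
    HasDerivAt (fun s => log ((√(cos s ^ 2 + c) - cos s) / k))
      ((√(cos s ^ 2 + c))⁻¹ * sin s) s := by
  have hw := sqrt_cos_sq_add_pos hc s
  have hu : 0 < √(cos s ^ 2 + c) - cos s := sub_pos.2 (cos_lt_sqrt_cos_sq_add hc s)
  refine ((((hasDerivAt_sqrt_cos_sq_add hc s).sub (hasDerivAt_cos s)).div_const k).log
    (div_ne_zero hu.ne' hk)).congr_deriv ?_
  simp only [Pi.sub_apply]
  field_simp
  ring

end

theorem angenentA_pos {t : ℝ} (ht : t < 0) : 0 < angenentA t :=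
  sqrt_pos.2 (inv_pos.2 (sub_pos.2 (one_lt_exp_iff.2 (by linarith))))

/-- The curvature of the Angenent oval equals `√(cos²θ + a(t)²)`: with `x' = ∂_θ x`,
`y' = ∂_θ y`, `x'' = ∂²_θ x`, `y'' = ∂²_θ y`, one has
`(x'·y'' − y'·x'') / (x'² + y'²)^{3/2} = √(cos²θ + a(t)²)`. -/
theorem angenent_curvature (t θ : ℝ) (ht : t < 0) :
    (deriv (fun s => angenentX s t) θ * deriv (deriv (fun s => angenentY s t)) θ -
        deriv (fun s => angenentY s t) θ * deriv (deriv (fun s => angenentX s t)) θ) /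
      ((deriv (fun s => angenentX s t) θ ^ 2 + deriv (fun s => angenentY s t) θ ^ 2) ^
        ((3 : ℝ) / 2)) =
      Real.sqrt (Real.cos θ ^ 2 + angenentA t ^ 2) := by
  change signedCurvature (fun s => angenentX s t) (fun s => angenentY s t) θ = _
  have hc : 0 < angenentA t ^ 2 := pow_pos (angenentA_pos ht) 2
  have hX : deriv (fun s => angenentX s t) =
      fun s => (√(cos s ^ 2 + angenentA t ^ 2))⁻¹ * cos s :=
    funext fun s => (hasDerivAt_arctan_sin_div_sqrt_cos_sq_add hc s).deriv
  have hY : deriv (fun s => angenentY s t) =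
      fun s => (√(cos s ^ 2 + angenentA t ^ 2))⁻¹ * sin s :=
    funext fun s => ((hasDerivAt_log_sqrt_cos_sq_add_sub_cos_div hc
      (sqrt_pos.2 (by positivity)).ne' s).const_add (-t)).deriv
  have hw := sqrt_cos_sq_add_pos hc θ
  have hg : DifferentiableAt ℝ (fun s => (√(cos s ^ 2 + angenentA t ^ 2))⁻¹) θ :=
    (hasDerivAt_sqrt_cos_sq_add hc θ).differentiableAt.inv hw.ne'
  rw [← inv_inv √(cos θ ^ 2 + angenentA t ^ 2)]
  exact signedCurvature_eq_inv_of_deriv_eq hX hY hg (inv_pos.2 hw)
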